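/- For every squarefree positive integer ℓ and every real number t, Σ_{vw=ℓ} (ν(v)/v) · (μ(w)·λ(w,t)/w^{1/2}) = ∏_{p∣ℓ} (1 − p^{−1/2−it})·(1 − p^{−1/2+it}), where the sum runs over ordered pairs (v,w) of positive integers with vw = ℓ. (This is the first identity of Lemma 3.4 of the paper; the right-hand side equals 1/(ζ_ℓ(1/2+it)·ζ_ℓ(1/2−it)).) -/
import Mathlib

open Finset Complex ArithmeticFunction

noncomputable def fnu : ArithmeticFunction ℂ :=
  ⟨fun n => if n = 0 then 0 else ∏ p ∈ n.primeFactors, (1 + (p : ℂ)⁻¹), by simp⟩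

noncomputable def fpow (s : ℂ) : ArithmeticFunction ℂ :=
  ⟨fun n => if n = 0 then 0 else (n : ℂ) ^ s, by simp⟩

lemma fnu_apply {n : ℕ} (hn : n ≠ 0) : fnu n = ∏ p ∈ n.primeFactors, (1 + (p : ℂ)⁻¹) := by
  simp [fnu, hn]

lemma fpow_apply (s : ℂ) {n : ℕ} (hn : n ≠ 0) : fpow s n = (n : ℂ) ^ s := by
  simp [fpow, hn]

lemma fnu_mult : fnu.IsMultiplicative := by
  refine ⟨by simp [fnu], ?_⟩
  intro m n h
  rcases eq_or_ne m 0 with rfl | hm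
  · simp [fnu]
  rcases eq_or_ne n 0 with rfl | hn
  · simp [fnu]
  rw [fnu_apply (Nat.mul_ne_zero hm hn), fnu_apply hm, fnu_apply hn,
    Nat.Coprime.primeFactors_mul h, Finset.prod_union (Nat.Coprime.disjoint_primeFactors h)]

lemma fpow_mult (s : ℂ) : (fpow s).IsMultiplicative := by
  refine ⟨by simp [fpow], ?_⟩
  intro m n h
  rcases eq_or_ne m 0 with rfl | hm
  · simp [fpow]
  rcases eq_or_ne n 0 with rfl | hn
  · simp [fpow]
  rw [fpow_apply s (Nat.mul_ne_zero hm hn), fpow_apply s hm, fpow_apply s hn,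
    Nat.cast_mul, natCast_mul_natCast_cpow]

noncomputable def gfun (t : ℝ) : ArithmeticFunction ℂ :=
  ((ArithmeticFunction.moebius : ArithmeticFunction ℤ) : ArithmeticFunction ℂ).pmul
    (((fpow ((t : ℂ) * I)) * (fpow (-((t : ℂ) * I)))).pmul (fpow (-(1 / 2))))

lemma gfun_mult (t : ℝ) : (gfun t).IsMultiplicative :=
  (isMultiplicative_moebius.intCast).pmul
    (((fpow_mult _).mul (fpow_mult _)).pmul (fpow_mult _))

lemma gfun_apply (t : ℝ) {w : ℕ} (hw : w ≠ 0) :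
    gfun t w = ((ArithmeticFunction.moebius w : ℤ) : ℂ) *
      (∑ ab ∈ w.divisorsAntidiagonal,
        (ab.1 : ℂ) ^ ((t : ℂ) * I) * (ab.2 : ℂ) ^ (-((t : ℂ) * I))) /
      (w : ℂ) ^ ((1 : ℂ) / 2) := by
  have hw0 : (w : ℂ) ≠ 0 := Nat.cast_ne_zero.mpr hw
  rw [gfun, pmul_apply, pmul_apply, intCoe_apply, mul_apply, fpow_apply _ hw]
  have hs : ∑ x ∈ w.divisorsAntidiagonal, fpow ((t : ℂ) * I) x.1 * fpow (-((t : ℂ) * I)) x.2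
      = ∑ ab ∈ w.divisorsAntidiagonal, (ab.1 : ℂ) ^ ((t : ℂ) * I) * (ab.2 : ℂ) ^ (-((t : ℂ) * I)) := by
    refine Finset.sum_congr rfl fun x hx => ?_
    obtain ⟨hx1, hx2⟩ := Nat.mem_divisorsAntidiagonal.mp hx
    rw [fpow_apply _ (Nat.ne_zero_of_mul_ne_zero_left (hx1 ▸ hx2)),
      fpow_apply _ (Nat.ne_zero_of_mul_ne_zero_left (by rw [mul_comm, hx1]; exact hx2))]
  rw [hs, cpow_neg]; ring

theorem stmt_2 (ℓ : ℕ) (hℓ : Squarefree ℓ) (t : ℝ) :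
    ∑ vw ∈ ℓ.divisorsAntidiagonal,
      (((vw.1 : ℂ) * ∏ p ∈ vw.1.primeFactors, (1 + (p : ℂ)⁻¹)) / (vw.1 : ℂ)) *
        (((ArithmeticFunction.moebius vw.2 : ℤ) : ℂ) *
          (∑ ab ∈ vw.2.divisorsAntidiagonal,
            (ab.1 : ℂ) ^ ((t : ℂ) * I) * (ab.2 : ℂ) ^ (-((t : ℂ) * I))) /
          (vw.2 : ℂ) ^ ((1 : ℂ) / 2)) =
    ∏ p ∈ ℓ.primeFactors,
      ((1 - (p : ℂ) ^ (-(1 : ℂ) / 2 - (t : ℂ) * I)) *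
        (1 - (p : ℂ) ^ (-(1 : ℂ) / 2 + (t : ℂ) * I))) := by
  have hℓ0 : ℓ ≠ 0 := hℓ.ne_zero
  have hmult : (fnu * gfun t).IsMultiplicative := fnu_mult.mul (gfun_mult t)
  have key : (∑ vw ∈ ℓ.divisorsAntidiagonal,
      (((vw.1 : ℂ) * ∏ p ∈ vw.1.primeFactors, (1 + (p : ℂ)⁻¹)) / (vw.1 : ℂ)) *
        (((ArithmeticFunction.moebius vw.2 : ℤ) : ℂ) *
          (∑ ab ∈ vw.2.divisorsAntidiagonal,
            (ab.1 : ℂ) ^ ((t : ℂ) * I) * (ab.2 : ℂ) ^ (-((t : ℂ) * I))) /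
          (vw.2 : ℂ) ^ ((1 : ℂ) / 2))) = (fnu * gfun t) ℓ := by
    rw [mul_apply]
    refine Finset.sum_congr rfl fun vw hvw => ?_
    obtain ⟨h1, h2⟩ := Nat.mem_divisorsAntidiagonal.mp hvw
    have hv : vw.1 ≠ 0 := Nat.ne_zero_of_mul_ne_zero_left (h1 ▸ h2)
    have hw : vw.2 ≠ 0 := Nat.ne_zero_of_mul_ne_zero_left (by rw [mul_comm, h1]; exact h2)
    rw [fnu_apply hv, gfun_apply t hw, mul_comm ((vw.1 : ℂ)) _, mul_div_assoc,
      div_self (show (vw.1 : ℂ) ≠ 0 from Nat.cast_ne_zero.mpr hv), mul_one]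
  rw [key]
  conv_lhs => rw [← Nat.prod_primeFactors_of_squarefree hℓ]
  rw [hmult.map_prod_of_subset_primeFactors ℓ _ subset_rfl]
  refine Finset.prod_congr rfl fun p hp => ?_
  have hpp : p.Prime := Nat.prime_of_mem_primeFactors hp
  have hp0 : (p : ℂ) ≠ 0 := Nat.cast_ne_zero.mpr hpp.pos.ne'
  have hp1 : p ≠ 1 := hpp.one_lt.ne'
  -- compute (fnu * gfun t) p
  rw [mul_apply, Nat.sum_divisorsAntidiagonal (fun a b => fnu a * gfun t b), hpp.divisors]
  rw [Finset.sum_pair (by exact fun h => hp1 h.symm)]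
  rw [Nat.div_one, Nat.div_self hpp.pos]
  rw [fnu_mult.1, gfun_mult t |>.1, fnu_apply hpp.pos.ne', gfun_apply t hpp.pos.ne']
  rw [Nat.Prime.primeFactors hpp, Finset.prod_singleton]
  rw [Nat.sum_divisorsAntidiagonal (fun (a b : ℕ) => (a : ℂ) ^ ((t : ℂ) * I) * (b : ℂ) ^ (-((t : ℂ) * I))), hpp.divisors,
    Finset.sum_pair (by exact fun h => hp1 h.symm), Nat.div_one, Nat.div_self hpp.pos]
  rw [ArithmeticFunction.moebius_apply_prime hpp]
  -- now pure cpow algebra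
  have ea : (p : ℂ) ^ (-(1 : ℂ) / 2 - (t : ℂ) * I)
      = (p : ℂ) ^ (-(1 : ℂ) / 2) * (p : ℂ) ^ (-((t : ℂ) * I)) := by
    rw [← cpow_add _ _ hp0]; ring_nf
  have eb : (p : ℂ) ^ (-(1 : ℂ) / 2 + (t : ℂ) * I)
      = (p : ℂ) ^ (-(1 : ℂ) / 2) * (p : ℂ) ^ ((t : ℂ) * I) := by
    rw [← cpow_add _ _ hp0]
  have hab : (p : ℂ) ^ ((t : ℂ) * I) * (p : ℂ) ^ (-((t : ℂ) * I)) = 1 := by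
    rw [← cpow_add _ _ hp0]; simp
  have hcc : (p : ℂ) ^ (-(1 : ℂ) / 2) * (p : ℂ) ^ (-(1 : ℂ) / 2) = (p : ℂ)⁻¹ := by
    rw [← cpow_add _ _ hp0]
    norm_num [cpow_neg_one]
  have h12 : ((p : ℂ) ^ ((1 : ℂ) / 2))⁻¹ = (p : ℂ) ^ (-(1 : ℂ) / 2) := by
    rw [neg_div, cpow_neg]
  rw [ea, eb, div_eq_mul_inv, h12]
  simp only [Nat.cast_one, one_cpow, one_mul, mul_one, Int.cast_neg, Int.cast_one]
  generalize (p:ℂ)^((t:ℂ)*I) = a at hab ⊢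
  generalize (p:ℂ)^(-((t:ℂ)*I)) = b at hab ⊢
  generalize (p:ℂ)^(-(1:ℂ)/2) = c at hcc ⊢
  generalize (p:ℂ)⁻¹ = i at hcc ⊢
  linear_combination (-(a*b)) * hcc - i * hab
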